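/- arXiv:2006.02092 — 2 statements merged into one kernel-verified Lean document; each statement's English description precedes it below -/
import Mathlib

section
/- Let Ω ⊆ V be a state space with only finitely many extreme points and positive cone V₊, and let J, K : V → V be linear maps, each strictly positive with respect to the inner product ⟪·,·⟫ (i.e. self-adjoint with ⟪x, J x⟫ > 0 and ⟪x, K x⟫ > 0 for all nonzero x), such that J(V₊) = K(V₊) = V₊*, where V₊* := {y ∈ V : ⟪x, y⟫ ≥ 0 for all x ∈ V₊} is the internal dual cone of V₊. Then for every extreme point ω of Ω there exists μ(ω) > 0 such that K ω = μ(ω) • (J ω). -/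
open RealInnerProductSpace

variable {V : Type*} [NormedAddCommGroup V] [InnerProductSpace ℝ V] [FiniteDimensional ℝ V]

/-- A state space: nonempty compact convex set whose affine hull misses `0` and has
dimension `dim V - 1` (so it spans `V`). -/
def IsStateSpace (Ω : Set V) : Prop :=
  Ω.Nonempty ∧ IsCompact Ω ∧ Convex ℝ Ω ∧ (0 : V) ∉ affineSpan ℝ Ω ∧
    Module.finrank ℝ (vectorSpan ℝ Ω) + 1 = Module.finrank ℝ V

/-- The group `GL(Ω)` of linear bijections preserving `Ω`. -/
def autGroup (Ω : Set V) : Set (V ≃ₗ[ℝ] V) := {T | T '' Ω = Ω}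

/-- Transitivity of the action of `GL(Ω)` on the extreme points of `Ω`. -/
def IsTransitive (Ω : Set V) : Prop :=
  ∀ ω₁ ∈ Set.extremePoints ℝ Ω, ∀ ω₂ ∈ Set.extremePoints ℝ Ω,
    ∃ T ∈ autGroup Ω, T ω₁ = ω₂

/-- The inner product of `V` is invariant under `GL(Ω)`. -/
def InvariantInner (Ω : Set V) : Prop :=
  ∀ T ∈ autGroup Ω, ∀ x y : V, ⟪T x, T y⟫ = ⟪x, y⟫

/-- The positive cone generated by `Ω`. -/
def posCone (Ω : Set V) : Set V := {x | ∃ l : ℝ, ∃ ω ∈ Ω, 0 ≤ l ∧ x = l • ω}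

/-- Self-duality of the positive cone with respect to the inner product of `V`. -/
def SelfDualCone (Ω : Set V) : Prop :=
  posCone Ω = {y | ∀ x ∈ posCone Ω, 0 ≤ ⟪x, y⟫}

/-- An effect on `Ω`. -/
def IsEffect (Ω : Set V) (e : V) : Prop := ∀ ω ∈ Ω, 0 ≤ ⟪e, ω⟫ ∧ ⟪e, ω⟫ ≤ 1

/-- A measurement with outcome set `A`: a family of nonzero effects summing to the
unit effect `ωM`. -/
def IsMeasurement (Ω : Set V) (ωM : V) {A : Type*} [Fintype A] (f : A → V) : Prop :=
  (∀ a, f a ≠ 0 ∧ IsEffect Ω (f a)) ∧ ∑ a, f a = ωM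

/-- An ideal measurement. -/
def IsIdeal (Ω : Set V) (ωM : V) {A : Type*} [Fintype A] (f : A → V) : Prop :=
  IsMeasurement Ω ωM f ∧
    ∃ c : ℝ, 0 < c ∧ (∀ ω ∈ Set.extremePoints ℝ Ω, ‖ω‖ = c) ∧
      ∀ a, ∃ S : Finset V, ↑S ⊆ Set.extremePoints ℝ Ω ∧
        (f a = (c ^ 2)⁻¹ • ∑ ω' ∈ S, ω' ∨ f a = ωM - (c ^ 2)⁻¹ • ∑ ω' ∈ S, ω')

/-- First marginal of a joint measurement. -/
def margF {A B : Type*} [Fintype B] (m : A × B → V) : A → V := fun a => ∑ b, m (a, b)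

/-- Second marginal of a joint measurement. -/
def margG {A B : Type*} [Fintype A] (m : A × B → V) : B → V := fun b => ∑ a, m (a, b)

open Classical in
/-- `∑_{a' : d(a',a) ≤ w/2} ⟪f a', ω⟫`. -/
noncomputable def ballSum {A : Type*} [Fintype A] [MetricSpace A]
    (f : A → V) (ω : V) (a : A) (w : ℝ) : ℝ :=
  ∑ a' ∈ Finset.univ.filter (fun x => dist x a ≤ w / 2), ⟪f a', ω⟫

/-- Overall width of the distribution of `f` on `ω` at confidence level `1 - ε`. -/
noncomputable def overallWidth {A : Type*} [Fintype A] [MetricSpace A]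
    (f : A → V) (ω : V) (ε : ℝ) : ℝ :=
  sInf {w : ℝ | 0 < w ∧ ∃ a : A, 1 - ε ≤ ballSum f ω a w}

/-- Error bar width of `ft` relative to `f`. -/
noncomputable def errorBarWidth (Ω : Set V) {A : Type*} [Fintype A] [MetricSpace A]
    (ft f : A → V) (ε : ℝ) : ℝ :=
  sInf {w : ℝ | 0 < w ∧ ∀ a : A, ∀ ω ∈ Ω, ⟪f a, ω⟫ = 1 → 1 - ε ≤ ballSum ft ω a w}

/-- Werner's measure `D_W(ft, f)`. -/
noncomputable def wernerD (Ω : Set V) {A : Type*} [Fintype A] [MetricSpace A]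
    (ft f : A → V) : ℝ :=
  sSup {d : ℝ | ∃ ω ∈ Ω, ∃ h : A → ℝ, (∀ a₁ a₂ : A, |h a₁ - h a₂| ≤ dist a₁ a₂) ∧
    d = |∑ a, h a * (⟪ft a, ω⟫ - ⟪f a, ω⟫)|}

/-- `l∞` distance `D_∞(ft, f)`. -/
noncomputable def dInfty (Ω : Set V) {A : Type*} (ft f : A → V) : ℝ :=
  sSup {d : ℝ | ∃ ω ∈ Ω, ∃ a : A, d = |⟪ft a, ω⟫ - ⟪f a, ω⟫|}

/-- Minimum localization error `LE(ω^F)`. -/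
noncomputable def locError {A : Type*} [Fintype A] [Nonempty A] (f : A → V) (ω : V) : ℝ :=
  1 - Finset.univ.sup' Finset.univ_nonempty (fun a => ⟪f a, ω⟫)

/-!
Put `L = J⁻¹ K`. Since `J` and `K` map the cone `V₊` onto the same cone `V₊*`, `L` maps `V₊`
onto itself, so it permutes the extreme rays of `V₊`, which are the rays through the extreme
points of `Ω`. With finitely many extreme points, some power satisfies `L ^ k ω = D • ω`
with `D > 0`. On the other hand `J L = K` makes `L` symmetric and positive for the inner
product `⟪x, J y⟫`, and for such an operator `L ^ k ω = m ^ k • ω` with `m > 0` forces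
`L ω = m • ω`; that is, `K ω = m • J ω`.
-/

section Normalization

variable {𝕜 E : Type*} [Field 𝕜] [AddCommGroup E] [Module 𝕜 E]

theorem exists_dual_eq_one_of_zero_notMem_affineSpan {s : Set E}
    (hs : (0 : E) ∉ affineSpan 𝕜 s) : ∃ f : Module.Dual 𝕜 E, ∀ x ∈ s, f x = 1 := by
  rcases s.eq_empty_or_nonempty with rfl | ⟨x₀, hx₀⟩
  · exact ⟨0, by simp⟩
  have hx₀span : x₀ ∉ vectorSpan 𝕜 s := fun h => hs <| by
    simpa using AffineSubspace.vadd_mem_of_mem_direction (v := -x₀)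
      (by rwa [direction_affineSpan, neg_mem_iff]) (subset_affineSpan 𝕜 s hx₀)
  obtain ⟨g, hgx₀, hker⟩ := Submodule.exists_le_ker_of_notMem hx₀span
  refine ⟨(g x₀)⁻¹ • g, fun x hx => ?_⟩
  have hgx : g x = g x₀ := sub_eq_zero.mp <| by
    rw [← map_sub]; exact hker (vsub_mem_vectorSpan 𝕜 hx hx₀)
  simp [hgx, hgx₀]

end Normalization

section Cone

variable {E : Type*} [AddCommGroup E] [Module ℝ E]

def IsExtremeRay (C : Set E) (x : E) : Prop :=
  x ∈ C ∧ ∀ y ∈ C, ∀ z ∈ C, y + z = x → ∃ t : ℝ, y = t • x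

theorem IsExtremeRay.map {C : Set E} {x : E} {L : E →ₗ[ℝ] E} (hL : Function.Injective L)
    (hC : L '' C = C) (hx : IsExtremeRay C x) : IsExtremeRay C (L x) := by
  refine ⟨hC ▸ Set.mem_image_of_mem L hx.1, fun y hy z hz hyz => ?_⟩
  obtain ⟨y', hy', rfl⟩ := (hC.symm ▸ hy : y ∈ L '' C)
  obtain ⟨z', hz', rfl⟩ := (hC.symm ▸ hz : z ∈ L '' C)
  obtain ⟨t, rfl⟩ := hx.2 y' hy' z' hz' (hL (by rw [map_add, hyz]))
  exact ⟨t, map_smul L t x⟩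

end Cone

section PosCone

variable {E : Type*} [NormedAddCommGroup E] [InnerProductSpace ℝ E]
  {Ω : Set E} {f : Module.Dual ℝ E}

theorem subset_posCone : Ω ⊆ posCone Ω :=
  fun ω hω => ⟨1, ω, hω, zero_le_one, (one_smul ℝ ω).symm⟩

theorem exists_pos_smul_of_mem_posCone {x : E} (hx : x ∈ posCone Ω) (hx0 : x ≠ 0) :
    ∃ l : ℝ, 0 < l ∧ ∃ ω ∈ Ω, x = l • ω := by
  obtain ⟨l, ω, hω, hl, rfl⟩ := hx
  exact ⟨l, hl.lt_of_ne (by rintro rfl; simp at hx0), ω, hω, rfl⟩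

variable (hf : ∀ ω ∈ Ω, f ω = 1)
include hf

theorem eq_of_smul_eq_smul_of_mem {a b : ℝ} {ω₁ ω₂ : E} (h₁ : ω₁ ∈ Ω) (h₂ : ω₂ ∈ Ω)
    (h : a • ω₁ = b • ω₂) : a = b := by
  simpa [hf ω₁ h₁, hf ω₂ h₂] using congrArg f h

theorem ne_zero_of_mem {ω : E} (hω : ω ∈ Ω) : ω ≠ 0 := by
  rintro rfl; simpa using hf 0 hω

theorem isExtremeRay_posCone_of_mem_extremePoints {ω : E} (hω : ω ∈ Set.extremePoints ℝ Ω) :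
    IsExtremeRay (posCone Ω) ω := by
  refine ⟨subset_posCone hω.1, fun y hy z hz hyz => ?_⟩
  rcases eq_or_ne y 0 with rfl | hy0
  · exact ⟨0, (zero_smul ℝ ω).symm⟩
  rcases eq_or_ne z 0 with rfl | hz0
  · exact ⟨1, by rw [one_smul, ← hyz, add_zero]⟩
  obtain ⟨a, ha, τ₁, hτ₁, rfl⟩ := exists_pos_smul_of_mem_posCone hy hy0
  obtain ⟨b, hb, τ₂, hτ₂, rfl⟩ := exists_pos_smul_of_mem_posCone hz hz0
  have hab : a + b = 1 := by
    simpa [hf τ₁ hτ₁, hf τ₂ hτ₂, hf ω hω.1] using congrArg f hyz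
  exact ⟨a, by rw [hω.2 hτ₁ hτ₂ ⟨a, b, ha, hb, hab, hyz⟩]⟩

theorem mem_extremePoints_of_isExtremeRay_smul {ω : E} (hω : ω ∈ Ω) {c : ℝ} (hc : 0 < c)
    (h : IsExtremeRay (posCone Ω) (c • ω)) : ω ∈ Set.extremePoints ℝ Ω := by
  refine ⟨hω, fun ρ₁ hρ₁ ρ₂ hρ₂ ⟨a, b, ha, hb, _, hab⟩ => ?_⟩
  have hmem : ∀ {d : ℝ} {ρ : E}, 0 < d → ρ ∈ Ω → (c * d) • ρ ∈ posCone Ω :=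
    fun {d ρ} hd hρ => ⟨c * d, ρ, hρ, (mul_pos hc hd).le, rfl⟩
  obtain ⟨t, ht⟩ := h.2 _ (hmem ha hρ₁) _ (hmem hb hρ₂) <| by
    rw [← hab, smul_add, smul_smul, smul_smul]
  rw [smul_smul] at ht
  rw [← eq_of_smul_eq_smul_of_mem hf hρ₁ hω ht] at ht
  exact smul_right_injective E (by positivity) ht

theorem exists_pos_smul_extremePoints_of_image_posCone_eq {L : E →ₗ[ℝ] E}
    (hL : Function.Injective L) (hLC : L '' posCone Ω = posCone Ω) {ω : E}
    (hω : ω ∈ Set.extremePoints ℝ Ω) :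
    ∃ c : ℝ, 0 < c ∧ ∃ ω' ∈ Set.extremePoints ℝ Ω, L ω = c • ω' := by
  have hray := (isExtremeRay_posCone_of_mem_extremePoints hf hω).map hL hLC
  have hLω0 : L ω ≠ 0 := (map_ne_zero_iff L hL).mpr (ne_zero_of_mem hf hω.1)
  obtain ⟨c, hc, ω', hω', hLω⟩ := exists_pos_smul_of_mem_posCone hray.1 hLω0
  exact ⟨c, hc, ω', mem_extremePoints_of_isExtremeRay_smul hf hω' hc (hLω ▸ hray), hLω⟩

end PosCone

section Orbit

variable {𝕜 E : Type*} [Field 𝕜] [LinearOrder 𝕜] [IsStrictOrderedRing 𝕜]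
  [AddCommGroup E] [Module 𝕜 E]

theorem exists_pow_apply_eq_smul_of_finite {S : Set E} (hS : S.Finite) {L : Module.End 𝕜 E}
    (hL : Function.Injective L) (hstep : ∀ x ∈ S, ∃ c : 𝕜, 0 < c ∧ ∃ y ∈ S, L x = c • y)
    {x : E} (hx : x ∈ S) : ∃ k : ℕ, 0 < k ∧ ∃ D : 𝕜, 0 < D ∧ (L ^ k) x = D • x := by
  choose! c hc φ hφ hLφ using hstep
  have horbit : ∀ n, φ^[n] x ∈ S := fun n => Set.MapsTo.iterate hφ n hx
  have hpow : ∀ n, ∃ C : 𝕜, 0 < C ∧ (L ^ n) x = C • φ^[n] x := by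
    intro n
    induction n with
    | zero => exact ⟨1, one_pos, by simp⟩
    | succ n ih =>
      obtain ⟨C, hC, h⟩ := ih
      refine ⟨c (φ^[n] x) * C, mul_pos (hc _ (horbit n)) hC, ?_⟩
      rw [pow_succ', Module.End.mul_apply, h, map_smul, hLφ _ (horbit n), smul_smul, mul_comm,
        Function.iterate_succ_apply']
  obtain ⟨a, b, hab, heq⟩ := hS.exists_lt_map_eq_of_forall_mem horbit
  obtain ⟨Ca, hCa, ha⟩ := hpow a
  obtain ⟨Cb, hCb, hb⟩ := hpow b
  refine ⟨b - a, by omega, Cb / Ca, div_pos hCb hCa, Module.End.iterate_injective hL a ?_⟩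
  rw [← Module.End.mul_apply, ← pow_add, Nat.add_sub_cancel' hab.le, map_smul, hb, ha, heq,
    smul_smul, div_mul_cancel₀ _ hCa.ne']

end Orbit

section Positivity

variable {E : Type*} [NormedAddCommGroup E] [InnerProductSpace ℝ E] {T J K L : E →ₗ[ℝ] E}

theorem LinearMap.injective_of_inner_self_pos (hT : ∀ x ≠ 0, 0 < ⟪x, T x⟫) :
    Function.Injective T :=
  (injective_iff_map_eq_zero T).mpr fun x hx => by
    by_contra hx0
    simpa [hx] using hT x hx0

theorem LinearMap.IsSymmetric.isPositive_of_inner_self_pos (hsymm : T.IsSymmetric)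
    (hT : ∀ x ≠ 0, 0 < ⟪x, T x⟫) : T.IsPositive := by
  refine (T.isPositive_iff).mpr ⟨hsymm, fun x => ?_⟩
  rcases eq_or_ne x 0 with rfl | hx
  · simp
  · exact real_inner_comm x (T x) ▸ (hT x hx).le

theorem inner_comp_apply_comm (hJ : J.IsSymmetric) (hK : K.IsSymmetric) (hJL : J ∘ₗ L = K)
    (x y : E) : ⟪x, J (L y)⟫ = ⟪L x, J y⟫ :=
  calc ⟪x, J (L y)⟫ = ⟪x, K y⟫ := by rw [← hJL, LinearMap.comp_apply]
    _ = ⟪K x, y⟫ := (hK x y).symm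
    _ = ⟪J (L x), y⟫ := by rw [← hJL, LinearMap.comp_apply]
    _ = ⟪L x, J y⟫ := hJ _ _

theorem inner_pow_apply_nonneg (hJ : J.IsPositive) (hK : K.IsPositive) (hJL : J ∘ₗ L = K) :
    ∀ (j : ℕ) (x : E), 0 ≤ ⟪x, J ((L ^ j) x)⟫
  | 0, x => by simpa using hJ.inner_nonneg_right x
  | 1, x => by simpa [← hJL] using hK.inner_nonneg_right x
  | j + 2, x => by
    rw [pow_succ', Module.End.mul_apply,
      inner_comp_apply_comm hJ.isSymmetric hK.isSymmetric hJL, pow_succ, Module.End.mul_apply]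
    exact inner_pow_apply_nonneg hJ hK hJL j (L x)

theorem apply_eq_smul_of_pow_apply_eq_pow_smul (hJ : J.IsSymmetric)
    (hJpos : ∀ x ≠ 0, 0 < ⟪x, J x⟫) (hK : K.IsPositive) (hJL : J ∘ₗ L = K) {k : ℕ} (hk : 0 < k)
    {m : ℝ} (hm : 0 < m) {x : E} (hx : (L ^ k) x = m ^ k • x) : L x = m • x := by
  -- `P (L - m) = L ^ k - m ^ k` with `P = ∑ L ^ i m ^ (k - 1 - i)`, and `⟪u, J (P u)⟫` is a sum
  -- of nonnegative terms whose `i = 0` term is `m ^ (k - 1) ⟪u, J u⟫`.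
  set u := L x - m • x
  set P : Module.End ℝ E := ∑ i ∈ Finset.range k, L ^ i * (m • 1) ^ (k - 1 - i)
  have hPu : P u = 0 := by
    simpa [P, u, smul_pow, hx] using
      congrArg (· x) (((Commute.one_right L).smul_right m).geom_sum₂_mul k)
  have hsum : ∑ i ∈ Finset.range k, m ^ (k - 1 - i) * ⟪u, J ((L ^ i) u)⟫ = 0 := by
    simpa [P, LinearMap.sum_apply, inner_sum, smul_pow, real_inner_smul_right] using
      congrArg (fun v => ⟪u, J v⟫) hPu
  have hterm := (Finset.sum_eq_zero_iff_of_nonneg fun i _ =>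
    mul_nonneg (pow_nonneg hm.le _)
      (inner_pow_apply_nonneg (hJ.isPositive_of_inner_self_pos hJpos) hK hJL i u)).mp hsum 0
      (Finset.mem_range.mpr hk)
  have huJu : ⟪u, J u⟫ = 0 := by simpa [hm.ne'] using hterm
  by_contra hne
  exact (hJpos u (sub_ne_zero.mpr hne)).ne' huJu

end Positivity

/-- **Lemma B.4 (paper).** If `Ω` has finitely many extreme points and `J, K` are
strictly positive linear maps both mapping the positive cone onto its internal dual
cone, then on every extreme point `K` is a positive multiple of `J`. -/
theorem strictlyPositive_maps_agree_on_extremePoints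
    {V : Type*} [NormedAddCommGroup V] [InnerProductSpace ℝ V] [FiniteDimensional ℝ V]
    {Ω : Set V} (hΩ : IsStateSpace Ω) (hfin : (Set.extremePoints ℝ Ω).Finite)
    {J K : V →ₗ[ℝ] V}
    (hJsym : ∀ x y : V, ⟪x, J y⟫ = ⟪J x, y⟫)
    (hJpos : ∀ x : V, x ≠ 0 → 0 < ⟪x, J x⟫)
    (hKsym : ∀ x y : V, ⟪x, K y⟫ = ⟪K x, y⟫)
    (hKpos : ∀ x : V, x ≠ 0 → 0 < ⟪x, K x⟫)
    (hJcone : J '' posCone Ω = {y : V | ∀ x ∈ posCone Ω, 0 ≤ ⟪x, y⟫})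
    (hKcone : K '' posCone Ω = {y : V | ∀ x ∈ posCone Ω, 0 ≤ ⟪x, y⟫}) :
    ∀ ω ∈ Set.extremePoints ℝ Ω, ∃ μ : ℝ, 0 < μ ∧ K ω = μ • (J ω) := by
  obtain ⟨f, hf⟩ := exists_dual_eq_one_of_zero_notMem_affineSpan hΩ.2.2.2.1
  let J' := LinearEquiv.ofInjectiveEndo J (LinearMap.injective_of_inner_self_pos hJpos)
  let L : V →ₗ[ℝ] V := J'.symm ∘ₗ K
  have hJL : J ∘ₗ L = K := by ext x; exact J'.apply_symm_apply (K x)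
  have hL : Function.Injective L :=
    J'.symm.injective.comp (LinearMap.injective_of_inner_self_pos hKpos)
  have hLC : L '' posCone Ω = posCone Ω := by
    rw [LinearMap.coe_comp, Set.image_comp, hKcone, ← hJcone]
    exact J'.symm_image_image _
  intro ω hω
  obtain ⟨k, hk, D, hD, hLk⟩ := exists_pow_apply_eq_smul_of_finite hfin hL
    (fun _ => exists_pos_smul_extremePoints_of_image_posCone_eq hf hL hLC) hω
  have hJsymm : J.IsSymmetric := fun x y => (hJsym x y).symm
  have hKsymm : K.IsSymmetric := fun x y => (hKsym x y).symm
  have hLω : L ω = D ^ (k⁻¹ : ℝ) • ω :=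
    apply_eq_smul_of_pow_apply_eq_pow_smul hJsymm hJpos
      (hKsymm.isPositive_of_inner_self_pos hKpos) hJL hk (by positivity)
      (by rwa [Real.rpow_inv_natCast_pow hD.le hk.ne'])
  exact ⟨D ^ (k⁻¹ : ℝ), by positivity, by rw [← hJL, LinearMap.comp_apply, hLω, map_smul]⟩
end

section
/- Let Ω ⊆ V be a transitive state space whose inner product ⟪·,·⟫ is GL(Ω)-invariant and whose positive cone V₊ is self-dual with respect to ⟪·,·⟫, and let ω_M be a GL(Ω)-invariant state with ‖ω_M‖ = 1 and ⟪ω_M, ω⟫ = 1 for all ω ∈ Ω. Let F = (f₀, f₁) and G = (g₀, g₁) be two-outcome ideal measurements, let λ ∈ [0,1], and suppose the fuzzy measurements F̃^λ := (λ f₀ + ((1−λ)/2) ω_M, λ f₁ + ((1−λ)/2) ω_M) and G̃^λ (defined analogously from G) are jointly measurable, i.e. there is a measurement (m_{ij})_{i,j∈{0,1}} with ∑_j m_{ij} = λ f_i + ((1−λ)/2) ω_M for each i and ∑_i m_{ij} = λ g_j + ((1−λ)/2) ω_M for each j. Then there exists a state ω ∈ Ω such that λ ≤ max(⟪f₀,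 ω⟫, ⟪f₁, ω⟫) + max(⟪g₀, ω⟫, ⟪g₁, ω⟫) − 1. -/
open RealInnerProductSpace

variable {V : Type*} [NormedAddCommGroup V] [InnerProductSpace ℝ V] [FiniteDimensional ℝ V]

/-!
If the bound failed, every state ω would satisfy `|⟪f₀ + g₀ - ωM, ω⟫| < λ` and
`|⟪f₀ - g₀, ω⟫| < λ`. Self-duality makes every effect a nonnegative multiple of a state and
makes ideal effects projections, `⟪f₀, f₀⟫ = ⟪ωM, f₀⟫`, whence
`‖f₀ + g₀ - ωM‖² + ‖f₀ - g₀‖² = 1`. The marginal conditions give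
`m₀₀ - m₁₁ = λ (f₀ + g₀ - ωM)` and `m₀₁ - m₁₀ = λ (f₀ - g₀)`, so
`λ = ⟪f₀ + g₀ - ωM, m₀₀ - m₁₁⟫ + ⟪f₀ - g₀, m₀₁ - m₁₀⟫`; writing `mᵢⱼ = κᵢⱼ ωᵢⱼ` with
`∑ κᵢⱼ = 1` bounds the right-hand side strictly by `λ`.
-/

section

variable {E : Type*} [NormedAddCommGroup E] [InnerProductSpace ℝ E] {Ω : Set E}

theorem mem_posCone_of_mem {ω : E} (hω : ω ∈ Ω) : ω ∈ posCone Ω :=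
  ⟨1, ω, hω, zero_le_one, (one_smul ℝ ω).symm⟩

theorem abs_inner_lt_of_mem_posCone {u d x : E} {l : ℝ} (hunit : ∀ ω ∈ Ω, ⟪u, ω⟫ = 1)
    (hd : ∀ ω ∈ Ω, |⟪d, ω⟫| < l) (hx : x ∈ posCone Ω) (hx0 : x ≠ 0) :
    |⟪d, x⟫| < l * ⟪u, x⟫ := by
  obtain ⟨κ, ω, hω, hκ, rfl⟩ := hx
  have hκ0 : 0 < κ := hκ.lt_of_ne (by rintro rfl; exact hx0 (zero_smul ℝ ω))
  rw [real_inner_smul_right, real_inner_smul_right, hunit ω hω, abs_mul, abs_of_pos hκ0]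
  nlinarith [hd ω hω]

namespace SelfDualCone

theorem inner_nonneg (hsd : SelfDualCone Ω) {x y : E} (hx : x ∈ posCone Ω)
    (hy : y ∈ posCone Ω) : 0 ≤ ⟪x, y⟫ := by
  rw [show posCone Ω = _ from hsd] at hy
  exact hy x hx

theorem mem_posCone_of_isEffect (hsd : SelfDualCone Ω) {e : E} (he : IsEffect Ω e) :
    e ∈ posCone Ω := by
  rw [show posCone Ω = _ from hsd]
  rintro x ⟨κ, ω, hω, hκ, rfl⟩
  rw [real_inner_smul_left, real_inner_comm]
  exact mul_nonneg hκ (he ω hω).1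

theorem inner_self_le_of_add_eq (hsd : SelfDualCone Ω) {e e' u : E} (he : IsEffect Ω e)
    (he' : IsEffect Ω e') (h : e + e' = u) : ⟪e, e⟫ ≤ ⟪u, e⟫ := by
  have := hsd.inner_nonneg (hsd.mem_posCone_of_isEffect he') (hsd.mem_posCone_of_isEffect he)
  rw [← h, inner_add_left]
  linarith

theorem card_mul_sq_le_inner_sum_self (hsd : SelfDualCone Ω) {c : ℝ}
    (hc : ∀ ω ∈ Set.extremePoints ℝ Ω, ‖ω‖ = c) {S : Finset E}
    (hS : ↑S ⊆ Set.extremePoints ℝ Ω) :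
    S.card * c ^ 2 ≤ ⟪∑ ω ∈ S, ω, ∑ ω ∈ S, ω⟫ := by
  have hSΩ : ∀ x ∈ S, x ∈ posCone Ω := fun x hx => mem_posCone_of_mem (extremePoints_subset (hS hx))
  calc (S.card : ℝ) * c ^ 2 = ∑ x ∈ S, ⟪x, x⟫ := by
        rw [Finset.sum_congr rfl fun x hx => by rw [real_inner_self_eq_norm_sq, hc x (hS hx)]]
        simp
    _ ≤ ∑ x ∈ S, ∑ y ∈ S, ⟪x, y⟫ := Finset.sum_le_sum fun x hx =>
        Finset.single_le_sum (f := fun y => ⟪x, y⟫)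
          (fun y hy => hsd.inner_nonneg (hSΩ x hx) (hSΩ y hy)) hx
    _ = ⟪∑ ω ∈ S, ω, ∑ ω ∈ S, ω⟫ := by rw [sum_inner]; simp only [inner_sum]

theorem inner_le_inner_self_of_eq_smul_sum (hsd : SelfDualCone Ω) {u : E}
    (hunit : ∀ ω ∈ Ω, ⟪u, ω⟫ = 1) {c : ℝ} (hc : ∀ ω ∈ Set.extremePoints ℝ Ω, ‖ω‖ = c)
    {S : Finset E} (hS : ↑S ⊆ Set.extremePoints ℝ Ω) {e : E}
    (he : e = (c ^ 2)⁻¹ • ∑ ω ∈ S, ω) : ⟪u, e⟫ ≤ ⟪e, e⟫ := by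
  have hu : ⟪u, ∑ ω ∈ S, ω⟫ = S.card := by
    rw [inner_sum, Finset.sum_congr rfl fun x hx => hunit x (extremePoints_subset (hS hx))]
    simp
  rw [he, real_inner_smul_left, real_inner_smul_right, real_inner_smul_right, hu]
  calc (c ^ 2)⁻¹ * S.card = (c ^ 2)⁻¹ * ((c ^ 2)⁻¹ * (S.card * c ^ 2)) := by
        rcases eq_or_ne c 0 with rfl | hc0
        · simp
        · field_simp
    _ ≤ _ := by gcongr; exact hsd.card_mul_sq_le_inner_sum_self hc hS

theorem inner_self_eq_of_eq_smul_sum (hsd : SelfDualCone Ω) {u : E}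
    (hunit : ∀ ω ∈ Ω, ⟪u, ω⟫ = 1) {c : ℝ} (hc : ∀ ω ∈ Set.extremePoints ℝ Ω, ‖ω‖ = c)
    {S : Finset E} (hS : ↑S ⊆ Set.extremePoints ℝ Ω) {e e' : E} (he : IsEffect Ω e)
    (he' : IsEffect Ω e') (hsum : e + e' = u) (heS : e = (c ^ 2)⁻¹ • ∑ ω ∈ S, ω) :
    ⟪e, e⟫ = ⟪u, e⟫ :=
  (hsd.inner_self_le_of_add_eq he he' hsum).antisymm
    (hsd.inner_le_inner_self_of_eq_smul_sum hunit hc hS heS)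

end SelfDualCone

theorem inner_sub_self_eq_of_inner_self_eq {u e : E} (huu : ⟪u, u⟫ = 1)
    (he : ⟪e, e⟫ = ⟪u, e⟫) : ⟪u - e, u - e⟫ = ⟪u, u - e⟫ := by
  simp only [inner_sub_left, inner_sub_right, huu, real_inner_comm u e]
  linarith

theorem IsIdeal.inner_self_zero {u : E} (hsd : SelfDualCone Ω) (hunit : ∀ ω ∈ Ω, ⟪u, ω⟫ = 1)
    (huu : ⟪u, u⟫ = 1) {f : Fin 2 → E} (hf : IsIdeal Ω u f) : ⟪f 0, f 0⟫ = ⟪u, f 0⟫ := by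
  obtain ⟨⟨heff, hsum⟩, c, -, hc, hideal⟩ := hf
  rw [Fin.sum_univ_two] at hsum
  obtain ⟨S, hS, hf0 | hf0⟩ := hideal 0
  · exact hsd.inner_self_eq_of_eq_smul_sum hunit hc hS (heff 0).2 (heff 1).2 hsum hf0
  · have hf1 : f 1 = (c ^ 2)⁻¹ • ∑ ω ∈ S, ω := by rw [eq_sub_of_add_eq' hsum, hf0]; abel
    have h1 := hsd.inner_self_eq_of_eq_smul_sum hunit hc hS (heff 1).2 (heff 0).2
      ((add_comm _ _).trans hsum) hf1
    rw [eq_sub_of_add_eq hsum]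
    exact inner_sub_self_eq_of_inner_self_eq huu h1

theorem inner_self_add_sub_add_inner_self_sub {u f g : E} (huu : ⟪u, u⟫ = 1)
    (hf : ⟪f, f⟫ = ⟪u, f⟫) (hg : ⟪g, g⟫ = ⟪u, g⟫) :
    ⟪f + g - u, f + g - u⟫ + ⟪f - g, f - g⟫ = 1 := by
  simp only [inner_sub_left, inner_sub_right, inner_add_left, inner_add_right,
    real_inner_comm u f, real_inner_comm u g, real_inner_comm f g]
  linarith

theorem diag_sub_eq_smul_of_marginals {u f₀ g₀ : E} {l : ℝ} {m : Fin 2 × Fin 2 → E}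
    (hsum : ∑ q, m q = u) (hF : margF m 0 = l • f₀ + ((1 - l) / 2) • u)
    (hG : margG m 0 = l • g₀ + ((1 - l) / 2) • u) :
    m (0, 0) - m (1, 1) = l • (f₀ + g₀ - u) := by
  simp only [margF, margG, Fin.sum_univ_two] at hF hG
  rw [Fintype.sum_prod_type, Fin.sum_univ_two, Fin.sum_univ_two, Fin.sum_univ_two] at hsum
  calc m (0, 0) - m (1, 1)
      = (m (0, 0) + m (0, 1)) + (m (0, 0) + m (1, 0)) -
          (m (0, 0) + m (0, 1) + (m (1, 0) + m (1, 1))) := by abel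
    _ = l • (f₀ + g₀ - u) := by rw [hsum, hF, hG]; module

theorem antidiag_sub_eq_smul_of_marginals {u f₀ g₀ : E} {l : ℝ} {m : Fin 2 × Fin 2 → E}
    (hF : margF m 0 = l • f₀ + ((1 - l) / 2) • u)
    (hG : margG m 0 = l • g₀ + ((1 - l) / 2) • u) :
    m (0, 1) - m (1, 0) = l • (f₀ - g₀) := by
  simp only [margF, margG, Fin.sum_univ_two] at hF hG
  calc m (0, 1) - m (1, 0) = (m (0, 0) + m (0, 1)) - (m (0, 0) + m (1, 0)) := by abel
    _ = l • (f₀ - g₀) := by rw [hF, hG]; module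

theorem exists_mem_le_max_abs_inner {u d₁ d₂ : E} {l : ℝ} {m : Fin 2 × Fin 2 → E}
    (hunit : ∀ ω ∈ Ω, ⟪u, ω⟫ = 1) (huu : ⟪u, u⟫ = 1) (hm : ∀ q, m q ∈ posCone Ω ∧ m q ≠ 0)
    (hsum : ∑ q, m q = u) (hd : ⟪d₁, d₁⟫ + ⟪d₂, d₂⟫ = 1)
    (h₁ : m (0, 0) - m (1, 1) = l • d₁) (h₂ : m (0, 1) - m (1, 0) = l • d₂) :
    ∃ ω ∈ Ω, l ≤ max |⟪d₁, ω⟫| |⟪d₂, ω⟫| := by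
  by_contra! hlt
  have hbound (d : E) (hd : ∀ ω ∈ Ω, |⟪d, ω⟫| < l) (q : Fin 2 × Fin 2) :=
    abs_lt.mp (abs_inner_lt_of_mem_posCone hunit hd (hm q).1 (hm q).2)
  have b₁ := hbound d₁ fun ω hω => (max_lt_iff.mp (hlt ω hω)).1
  have b₂ := hbound d₂ fun ω hω => (max_lt_iff.mp (hlt ω hω)).2
  have hu : ⟪u, m (0, 0)⟫ + ⟪u, m (0, 1)⟫ + (⟪u, m (1, 0)⟫ + ⟪u, m (1, 1)⟫) = 1 := by
    rw [← huu, ← hsum, Fintype.sum_prod_type, Fin.sum_univ_two, Fin.sum_univ_two,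
      Fin.sum_univ_two]
    simp only [inner_add_right]
  have hl : l = ⟪d₁, m (0, 0) - m (1, 1)⟫ + ⟪d₂, m (0, 1) - m (1, 0)⟫ := by
    rw [h₁, h₂, real_inner_smul_right, real_inner_smul_right]
    linear_combination (-l) * hd
  rw [inner_sub_right, inner_sub_right] at hl
  nlinarith [b₁ (0, 0), b₁ (1, 1), b₂ (0, 1), b₂ (1, 0)]

end

theorem max_abs_le_max_add_max (a b : ℝ) :
    max |a + b - 1| |a - b| ≤ max a (1 - a) + max b (1 - b) - 1 := by
  have := le_max_left a (1 - a)
  have := le_max_right a (1 - a)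
  have := le_max_left b (1 - b)
  have := le_max_right b (1 - b)
  refine max_le (abs_le.mpr ⟨?_, ?_⟩) (abs_le.mpr ⟨?_, ?_⟩) <;> linarith

theorem degree_of_incompatibility_bound_general
    {V : Type*} [NormedAddCommGroup V] [InnerProductSpace ℝ V]
    {Ω : Set V} (hsd : SelfDualCone Ω)
    {ωM : V} (hωMnorm : ‖ωM‖ = 1) (hωMunit : ∀ ω ∈ Ω, ⟪ωM, ω⟫ = 1)
    {f g : Fin 2 → V} (hF : IsIdeal Ω ωM f) (hG : IsIdeal Ω ωM g)
    {l : ℝ}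
    {m : Fin 2 × Fin 2 → V} (hM : IsMeasurement Ω ωM m)
    (hmargF : ∀ i : Fin 2, margF m i = l • f i + ((1 - l) / 2) • ωM)
    (hmargG : ∀ j : Fin 2, margG m j = l • g j + ((1 - l) / 2) • ωM) :
    ∃ ω ∈ Ω, l ≤ max ⟪f 0, ω⟫ ⟪f 1, ω⟫ + max ⟪g 0, ω⟫ ⟪g 1, ω⟫ - 1 := by
  have huu : ⟪ωM, ωM⟫ = 1 := by rw [real_inner_self_eq_norm_sq, hωMnorm, one_pow]
  obtain ⟨ω, hω, hle⟩ := exists_mem_le_max_abs_inner hωMunit huu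
    (fun q => ⟨hsd.mem_posCone_of_isEffect (hM.1 q).2, (hM.1 q).1⟩) hM.2
    (inner_self_add_sub_add_inner_self_sub huu (hF.inner_self_zero hsd hωMunit huu)
      (hG.inner_self_zero hsd hωMunit huu))
    (diag_sub_eq_smul_of_marginals hM.2 (hmargF 0) (hmargG 0))
    (antidiag_sub_eq_smul_of_marginals (hmargF 0) (hmargG 0))
  have hcompl {h : Fin 2 → V} (hh : IsIdeal Ω ωM h) : ⟪h 1, ω⟫ = 1 - ⟪h 0, ω⟫ := by
    rw [← hωMunit ω hω, ← hh.1.2, Fin.sum_univ_two, inner_add_left]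
    ring
  refine ⟨ω, hω, hle.trans ?_⟩
  rw [hcompl hF, hcompl hG]
  simpa only [inner_sub_left, inner_add_left, hωMunit ω hω] using
    max_abs_le_max_add_max ⟪f 0, ω⟫ ⟪g 0, ω⟫

/-- **Eq. (37) of the paper.** In a transitive, self-dual GPT, if the fuzzy versions
`F̃^λ, G̃^λ` of two two-outcome ideal measurements are jointly measurable, then `λ` is
bounded by `max_i ⟪f_i, ω⟫ + max_j ⟪g_j, ω⟫ - 1` for some state `ω`. -/
theorem degree_of_incompatibility_bound
    {V : Type*} [NormedAddCommGroup V] [InnerProductSpace ℝ V] [FiniteDimensional ℝ V]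
    {Ω : Set V} (hΩ : IsStateSpace Ω) (htrans : IsTransitive Ω)
    (hinv : InvariantInner Ω) (hsd : SelfDualCone Ω)
    {ωM : V} (hωMΩ : ωM ∈ Ω) (hωMfix : ∀ T ∈ autGroup Ω, T ωM = ωM)
    (hωMnorm : ‖ωM‖ = 1) (hωMunit : ∀ ω ∈ Ω, ⟪ωM, ω⟫ = 1)
    {f g : Fin 2 → V} (hF : IsIdeal Ω ωM f) (hG : IsIdeal Ω ωM g)
    {l : ℝ} (hl : l ∈ Set.Icc (0 : ℝ) 1)
    {m : Fin 2 × Fin 2 → V} (hM : IsMeasurement Ω ωM m)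
    (hmargF : ∀ i : Fin 2, margF m i = l • f i + ((1 - l) / 2) • ωM)
    (hmargG : ∀ j : Fin 2, margG m j = l • g j + ((1 - l) / 2) • ωM) :
    ∃ ω ∈ Ω, l ≤ max ⟪f 0, ω⟫ ⟪f 1, ω⟫ + max ⟪g 0, ω⟫ ⟪g 1, ω⟫ - 1 :=
  degree_of_incompatibility_bound_general hsd hωMnorm hωMunit hF hG hM hmargF hmargG
end
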